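/- Fix a positive integer N. For positive integers M, let 𝓜_{N,M} be the set of isometry classes in M_0 of compact totally disconnected metric spaces (X, d) admitting a finite partition into nonempty clopen subsets U_1, …, U_k such that each U_i has diameter less than 1/N, and such that for any indices with {i, j} ≠ {i', j'} as two-element sets (i ≠ j and i' ≠ j'), every x ∈ U_i, y ∈ U_j, x' ∈ U_{i'}, y' ∈ U_{j'} satisfy |d(x, y) − d(x', y')| > 1/M. Then the union over all positive integers M of the sets 𝓜_{N,M} is dense in M_0. -/

import Mathlib

/-- `HasFinePartition X N M` means `X` admits a finite partition into nonempty clopen subsets,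
each of diameter less than `1/N`, such that whenever `{i, j} ≠ {i', j'}` as two-element sets
(`i ≠ j`, `i' ≠ j'`), points `x ∈ Uᵢ`, `y ∈ Uⱼ`, `x' ∈ U_{i'}`, `y' ∈ U_{j'}` satisfy
`|dist x y - dist x' y'| > 1/M`. -/
def HasFinePartition (X : Type*) [MetricSpace X] (N M : ℕ) : Prop :=
  ∃ (k : ℕ) (U : Fin k → Set X),
    (∀ i, (U i).Nonempty) ∧ (∀ i, IsClopen (U i)) ∧
    (∀ i, Metric.diam (U i) < 1 / (N : ℝ)) ∧
    (⋃ i, U i) = Set.univ ∧ Pairwise (Function.onFun Disjoint U) ∧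
    ∀ i j i' j' : Fin k, i ≠ j → i' ≠ j' → ({i, j} : Set (Fin k)) ≠ ({i', j'} : Set (Fin k)) →
      ∀ x ∈ U i, ∀ y ∈ U j, ∀ x' ∈ U i', ∀ y' ∈ U j',
        1 / (M : ℝ) < |dist x y - dist x' y'|

/-!
A compact space is Gromov–Hausdorff close to a finite `δ`-net in it. On the net, round every
distance up to a multiple of `δ` and add a small offset encoding the unordered pair: this is
still a metric, within `3δ` of the original one, and distinct pairs now have distinct distances.
A finite space is discrete, hence totally disconnected, and its singletons form the required
partition for every `N`, with `1 / M` below the least gap between distinct distances.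
-/

open Set Metric Filter GromovHausdorff

theorem Set.Finite.exists_one_div_lt_abs_sub {S : Set ℝ} (hS : S.Finite) :
    ∃ M : ℕ, 0 < M ∧ ∀ a ∈ S, ∀ b ∈ S, a ≠ b → 1 / (M : ℝ) < |a - b| := by
  have : Finite S := hS
  have hgap : ∀ᶠ n : ℕ in atTop, ∀ p : S × S, p.1 ≠ p.2 → 1 / (n : ℝ) < |(p.1 : ℝ) - p.2| :=
    eventually_all.2 fun p => eventually_imp_distrib_left.2 fun hp =>
      tendsto_one_div_atTop_nhds_zero_nat.eventually
        (gt_mem_nhds (abs_pos.2 (sub_ne_zero.2 (Subtype.coe_injective.ne hp))))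
  obtain ⟨M, hM0, hM⟩ := ((eventually_gt_atTop 0).and hgap).exists
  exact ⟨M, hM0, fun a ha b hb hab => hM (⟨a, ha⟩, ⟨b, hb⟩) fun h => hab (congrArg Subtype.val h)⟩

def HasDistinctDistances (X : Type*) [MetricSpace X] : Prop :=
  ∀ ⦃x y x' y' : X⦄, x ≠ y → x' ≠ y' → s(x, y) ≠ s(x', y') → dist x y ≠ dist x' y'

section DistinctDistances

variable {X Y : Type*} [MetricSpace X] [MetricSpace Y]

theorem HasDistinctDistances.of_isometry {f : X → Y} (hf : Isometry f)
    (h : HasDistinctDistances Y) : HasDistinctDistances X := by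
  intro x y x' y' hxy hxy' hne
  rw [← hf.dist_eq, ← hf.dist_eq]
  refine h (hf.injective.ne hxy) (hf.injective.ne hxy') ?_
  rwa [← Sym2.map_mk, ← Sym2.map_mk, (Sym2.map.injective hf.injective).ne_iff]

theorem hasFinePartition_of_finite [Finite X] {N M : ℕ} (hN : 0 < N)
    (hM : ∀ ⦃x y x' y' : X⦄, x ≠ y → x' ≠ y' → s(x, y) ≠ s(x', y') →
      1 / (M : ℝ) < |dist x y - dist x' y'|) :
    HasFinePartition X N M := by
  let e := Finite.equivFin X
  refine ⟨Nat.card X, fun i => {e.symm i}, fun _ => singleton_nonempty _,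
    fun _ => isClopen_discrete _, fun _ => ?_, iUnion_eq_univ_iff.2 fun x => ⟨e x, by simp⟩,
    fun i j hij => disjoint_singleton.2 (e.symm.injective.ne hij), ?_⟩
  · rw [diam_singleton]
    positivity
  · rintro i j i' j' hij hij' hpair _ rfl _ rfl _ rfl _ rfl
    refine hM (e.symm.injective.ne hij) (e.symm.injective.ne hij') fun h => hpair ?_
    simpa [pair_eq_pair_iff, Sym2.eq_iff] using h

theorem HasDistinctDistances.exists_hasFinePartition [Finite X] (hX : HasDistinctDistances X)
    {N : ℕ} (hN : 0 < N) : ∃ M : ℕ, 0 < M ∧ HasFinePartition X N M := by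
  obtain ⟨M, hM0, hM⟩ := (finite_range fun p : X × X => dist p.1 p.2).exists_one_div_lt_abs_sub
  exact ⟨M, hM0, hasFinePartition_of_finite hN fun x y x' y' hxy hxy' hne =>
    hM _ ⟨(x, y), rfl⟩ _ ⟨(x', y'), rfl⟩ (hX hxy hxy' hne)⟩

end DistinctDistances

section Perturbation

variable {X : Type*} [Finite X]

noncomputable def pairCode (z : Sym2 X) : ℕ := Finite.equivFin (Sym2 X) z

theorem pairCode_lt (z : Sym2 X) : pairCode z < Nat.card (Sym2 X) :=
  (Finite.equivFin (Sym2 X) z).isLt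

theorem pairCode_injective : Function.Injective (pairCode (X := X)) :=
  Fin.val_injective.comp (Finite.equivFin (Sym2 X)).injective

theorem pairCode_div_mem_Ico (z : Sym2 X) :
    (pairCode z / Nat.card (Sym2 X) : ℝ) ∈ Ico 0 1 := by
  have hm : (0 : ℝ) < Nat.card (Sym2 X) := by exact_mod_cast (pairCode_lt z).pos
  exact ⟨by positivity, (div_lt_one hm).2 (by exact_mod_cast pairCode_lt z)⟩

variable [MetricSpace X] {δ : ℝ}

variable (δ) in
open Classical in
/-- The extra `δ` absorbs the tie-breaking offset (which is `< δ`) in the triangle inequality;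
the offset makes `perturbedDist δ x y / (δ / m)` a natural number whose residue modulo
`m = Nat.card (Sym2 X)` encodes the pair `s(x, y)`. -/
noncomputable def perturbedDist (x y : X) : ℝ :=
  if x = y then 0 else δ * (⌈dist x y / δ⌉₊ + 1 + pairCode s(x, y) / Nat.card (Sym2 X))

theorem perturbedDist_self (x : X) : perturbedDist δ x x = 0 := if_pos rfl

theorem perturbedDist_of_ne {x y : X} (h : x ≠ y) : perturbedDist δ x y =
    δ * (⌈dist x y / δ⌉₊ + 1 + pairCode s(x, y) / Nat.card (Sym2 X)) :=
  if_neg h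

theorem perturbedDist_comm (x y : X) : perturbedDist δ x y = perturbedDist δ y x := by
  rcases eq_or_ne x y with rfl | h
  · rfl
  · rw [perturbedDist_of_ne h, perturbedDist_of_ne h.symm, dist_comm, Sym2.eq_swap]

theorem perturbedDist_mem_Ico (hδ : 0 < δ) {x y : X} (h : x ≠ y) :
    perturbedDist δ x y ∈ Ico (dist x y + δ) (dist x y + 3 * δ) := by
  obtain ⟨hc₀, hc₁⟩ := pairCode_div_mem_Ico s(x, y)
  have hceil := Nat.le_ceil (dist x y / δ)
  have hceil' := Nat.ceil_lt_add_one (div_nonneg (dist_nonneg : 0 ≤ dist x y) hδ.le)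
  have hd : δ * (dist x y / δ) = dist x y := mul_div_cancel₀ _ hδ.ne'
  rw [perturbedDist_of_ne h]
  constructor <;> nlinarith

theorem le_perturbedDist (hδ : 0 < δ) {x y : X} (h : x ≠ y) : δ ≤ perturbedDist δ x y := by
  linarith [(perturbedDist_mem_Ico hδ h).1, (dist_nonneg : 0 ≤ dist x y)]

theorem perturbedDist_nonneg (hδ : 0 < δ) (x y : X) : 0 ≤ perturbedDist δ x y := by
  rcases eq_or_ne x y with rfl | h
  · rw [perturbedDist_self]
  · exact hδ.le.trans (le_perturbedDist hδ h)

theorem abs_dist_sub_perturbedDist_le (hδ : 0 < δ) (x y : X) :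
    |dist x y - perturbedDist δ x y| ≤ 3 * δ := by
  rcases eq_or_ne x y with rfl | h
  · simp [perturbedDist_self, hδ.le]
  · obtain ⟨h₁, h₂⟩ := perturbedDist_mem_Ico hδ h
    rw [abs_le]
    constructor <;> linarith

theorem perturbedDist_triangle (hδ : 0 < δ) (x y z : X) :
    perturbedDist δ x z ≤ perturbedDist δ x y + perturbedDist δ y z := by
  rcases eq_or_ne x z with rfl | hxz
  · rw [perturbedDist_self]
    exact add_nonneg (perturbedDist_nonneg hδ x y) (perturbedDist_nonneg hδ y x)
  rcases eq_or_ne x y with rfl | hxy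
  · rw [perturbedDist_self, zero_add]
  rcases eq_or_ne y z with rfl | hyz
  · rw [perturbedDist_self, add_zero]
  have hceil : ⌈dist x z / δ⌉₊ ≤ ⌈dist x y / δ⌉₊ + ⌈dist y z / δ⌉₊ :=
    (Nat.ceil_mono (by rw [← add_div]; gcongr; exact dist_triangle x y z)).trans
      (Nat.ceil_add_le _ _)
  have hceil' : (⌈dist x z / δ⌉₊ : ℝ) ≤ ⌈dist x y / δ⌉₊ + ⌈dist y z / δ⌉₊ := by
    exact_mod_cast hceil
  obtain ⟨-, hxz₁⟩ := pairCode_div_mem_Ico s(x, z)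
  obtain ⟨hxy₀, -⟩ := pairCode_div_mem_Ico s(x, y)
  obtain ⟨hyz₀, -⟩ := pairCode_div_mem_Ico s(y, z)
  rw [perturbedDist_of_ne hxz, perturbedDist_of_ne hxy, perturbedDist_of_ne hyz, ← mul_add]
  exact mul_le_mul_of_nonneg_left (by linarith) hδ.le

theorem perturbedDist_eq_div_mul {x y : X} (h : x ≠ y) :
    perturbedDist δ x y = δ / Nat.card (Sym2 X) *
      (Nat.card (Sym2 X) * (⌈dist x y / δ⌉₊ + 1) + pairCode s(x, y) : ℕ) := by
  have hm : (0 : ℝ) < Nat.card (Sym2 X) := by exact_mod_cast (pairCode_lt s(x, y)).pos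
  rw [perturbedDist_of_ne h]
  push_cast
  field_simp

theorem sym2_eq_of_perturbedDist_eq (hδ : 0 < δ) {x y x' y' : X} (h : x ≠ y) (h' : x' ≠ y')
    (heq : perturbedDist δ x y = perturbedDist δ x' y') : s(x, y) = s(x', y') := by
  have hm : (0 : ℝ) < Nat.card (Sym2 X) := by exact_mod_cast (pairCode_lt s(x, y)).pos
  rw [perturbedDist_eq_div_mul h, perturbedDist_eq_div_mul h',
    mul_right_inj' (by positivity), Nat.cast_inj] at heq
  apply pairCode_injective
  have := congrArg (· % Nat.card (Sym2 X)) heq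
  simpa [Nat.mul_add_mod, Nat.mod_eq_of_lt (pairCode_lt _)] using this

end Perturbation

def Perturbed (_δ : ℝ) (X : Type*) : Type _ := X

namespace Perturbed

variable (δ : ℝ) {X : Type*}

def toPerturbed : X ≃ Perturbed δ X := Equiv.refl X

instance [Finite X] : Finite (Perturbed δ X) := inferInstanceAs (Finite X)

instance [Nonempty X] : Nonempty (Perturbed δ X) := inferInstanceAs (Nonempty X)

variable [MetricSpace X] [Finite X] [Fact (0 < δ)]

noncomputable instance : MetricSpace (Perturbed δ X) where
  dist x y := perturbedDist δ ((toPerturbed δ).symm x) ((toPerturbed δ).symm y)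
  dist_self _ := perturbedDist_self _
  dist_comm _ _ := perturbedDist_comm _ _
  dist_triangle _ _ _ := perturbedDist_triangle Fact.out _ _ _
  eq_of_dist_eq_zero {x y} h := by
    by_contra hxy
    have hδ : 0 < δ := Fact.out
    have := le_perturbedDist hδ ((toPerturbed δ).symm.injective.ne hxy)
    linarith

theorem dist_toPerturbed (x y : X) :
    dist (toPerturbed δ x) (toPerturbed δ y) = perturbedDist δ x y :=
  rfl

theorem hasDistinctDistances : HasDistinctDistances (Perturbed δ X) :=
  fun _ _ _ _ hxy hxy' hne heq => hne (sym2_eq_of_perturbedDist_eq (X := X) Fact.out hxy hxy' heq)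

end Perturbed

open Perturbed

theorem ghDist_perturbed_le {X : Type*} [MetricSpace X] [CompactSpace X] [Nonempty X] {δ : ℝ}
    [Fact (0 < δ)] {t : Set X} [Finite t] [Nonempty t] (ht : ∀ x : X, ∃ y ∈ t, dist x y ≤ δ) :
    ghDist X (Perturbed δ t) ≤ δ + 3 * δ / 2 := by
  simpa using ghDist_le_of_approx_subsets (toPerturbed δ) (ε₃ := 0) ht
    (fun y => ⟨(toPerturbed δ).symm y, by simp⟩)
    fun x y => (dist_toPerturbed δ x y).symm ▸ abs_dist_sub_perturbedDist_le Fact.out x y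

theorem GromovHausdorff.exists_finite_hasDistinctDistances_dist_lt (p : GHSpace) {ε : ℝ}
    (hε : 0 < ε) : ∃ q : GHSpace, Finite q.Rep ∧ HasDistinctDistances q.Rep ∧ dist p q < ε := by
  have hδ : 0 < ε / 3 := by positivity
  have : Fact (0 < ε / 3) := ⟨hδ⟩
  obtain ⟨t, -, htfin, htcover⟩ := finite_cover_balls_of_compact (isCompact_univ (X := p.Rep)) hδ
  have ht : ∀ x, ∃ y ∈ t, dist x y ≤ ε / 3 := fun x => by
    obtain ⟨y, hy, hxy⟩ := mem_iUnion₂.1 (htcover (mem_univ x))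
    exact ⟨y, hy, (mem_ball.1 hxy).le⟩
  have : Finite t := htfin
  have : Nonempty t := by
    obtain ⟨y, hy, -⟩ := ht (Classical.arbitrary p.Rep)
    exact ⟨⟨y, hy⟩⟩
  obtain ⟨Ψ⟩ := toGHSpace_eq_toGHSpace_iff_isometryEquiv.1
    (GHSpace.toGHSpace_rep (toGHSpace (Perturbed (ε / 3) t)))
  refine ⟨toGHSpace (Perturbed (ε / 3) t), Finite.of_equiv _ Ψ.toEquiv.symm,
    (hasDistinctDistances _).of_isometry Ψ.isometry, ?_⟩
  calc dist p _ = ghDist p.Rep (Perturbed (ε / 3) t) := by rw [ghDist, GHSpace.toGHSpace_rep]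
    _ ≤ ε / 3 + 3 * (ε / 3) / 2 := ghDist_perturbed_le ht
    _ < ε := by linarith

/-- For a fixed positive integer `N`, the union over all positive integers `M` of the sets
`𝓜_{N,M}` is dense in `M₀`, the subspace of the Gromov–Hausdorff space consisting of classes
of totally disconnected compact metric spaces. -/
theorem dense_iUnion_hasFinePartition (N : ℕ) (hN : 0 < N) :
    Dense {p : {q : GromovHausdorff.GHSpace // TotallyDisconnectedSpace q.Rep} |
      ∃ M : ℕ, 0 < M ∧ HasFinePartition p.val.Rep N M} := by
  refine Metric.dense_iff.2 fun p r hr => ?_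
  obtain ⟨q, hfin, hq, hpq⟩ := exists_finite_hasDistinctDistances_dist_lt p.val hr
  obtain ⟨M, hM, hfine⟩ := hq.exists_hasFinePartition hN
  exact ⟨⟨q, inferInstance⟩, by rwa [mem_ball, Subtype.dist_eq, dist_comm], M, hM, hfine⟩
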